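/- One has 𝒢(3,0) = (27√3)/(2π) − 9. -/

import Mathlib

open intervalIntegral Real Complex

/-- `u(t) = (−1 + i√(4t−1))/(2t)`. -/
noncomputable def uu (t : ℝ) : ℂ :=
  (-1 + Complex.I * (Real.sqrt (4 * t - 1) : ℝ)) / (2 * t)

/-- The renormalized Green's function of the triangular-lattice walk:
`𝒢(x,y) = (3/π) ∫_{1/4}^{1} (4t−1)^{−1/2} ( t^y Σ_{j=1}^{x} C(x,j)(1−t)^{j−1} Re(u(t)^j)
  − Σ_{ℓ=0}^{y−1} t^ℓ ) dt`. -/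
noncomputable def calG (x y : ℕ) : ℝ :=
  (3 / Real.pi) * ∫ t in (1/4 : ℝ)..1,
    (1 / Real.sqrt (4 * t - 1)) *
      (t ^ y * ∑ j ∈ Finset.Icc 1 x, (x.choose j : ℝ) * (1 - t) ^ (j - 1) * ((uu t) ^ j).re
        - ∑ l ∈ Finset.range y, t ^ l)

/-!
The number `u = u(t)` is a root of `t u² + u + 1 = 0` with `Re u = -1/(2t)`, so `Re (u ^ 2)` and
`Re (u ^ 3)` are rational in `t` and the integrand of `𝒢(3,0)` is
`(9t³ - 19t² + 8t - 1) / (2t³ √(4t - 1))`. The substitution `s = √(4t - 1)` turns this into a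
rational function of `s`, which yields an elementary primitive; its value at `t = 1` contains
`arctan √3 = π / 3`. The integrand is nonpositive on `(1/4, 1]`, so despite the singularity at
`1/4` it is integrable there, being the derivative of a continuous monotone function.
-/

lemma uu_re (t : ℝ) : (uu t).re = -1 / (2 * t) := by
  rw [uu, show (2 * t : ℂ) = ((2 * t : ℝ) : ℂ) by push_cast; ring, Complex.div_ofReal_re]
  simp

lemma uu_quadratic {t : ℝ} (ht : 1 / 4 ≤ t) : (t : ℂ) * uu t ^ 2 + uu t + 1 = 0 := by
  have hs : ((√(4 * t - 1) : ℝ) : ℂ) ^ 2 = 4 * t - 1 := by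
    rw [← Complex.ofReal_pow, Real.sq_sqrt (by linarith)]; push_cast; ring
  have ht0 : (t : ℂ) ≠ 0 := by exact_mod_cast (show t ≠ 0 by positivity)
  rw [uu]
  field_simp
  linear_combination (-1 : ℂ) * hs + (↑√(4 * t - 1) : ℂ) ^ 2 * Complex.I_sq

lemma sum_choose_three_re_uu_pow {t : ℝ} (ht : 1 / 4 ≤ t) :
    ∑ j ∈ Finset.Icc 1 3, ((3 : ℕ).choose j : ℝ) * (1 - t) ^ (j - 1) * ((uu t) ^ j).re
      = (9 * t ^ 3 - 19 * t ^ 2 + 8 * t - 1) / (2 * t ^ 3) := by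
  have ht0 : t ≠ 0 := by positivity
  have hq := uu_quadratic ht
  have h2 : t * (uu t ^ 2).re = -((uu t).re + 1) := by
    rw [← Complex.re_ofReal_mul, show (t : ℂ) * uu t ^ 2 = -(uu t + 1) by linear_combination hq]
    simp
  have h3 : t * (uu t ^ 3).re = -((uu t ^ 2).re + (uu t).re) := by
    rw [← Complex.re_ofReal_mul,
      show (t : ℂ) * uu t ^ 3 = -(uu t ^ 2 + uu t) by linear_combination uu t * hq]
    simp
  rw [uu_re] at h2 h3
  have hre2 : (uu t ^ 2).re = (1 - 2 * t) / (2 * t ^ 2) := by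
    field_simp at h2 ⊢
    linarith
  have hre3 : (uu t ^ 3).re = (3 * t - 1) / (2 * t ^ 3) := by
    rw [hre2] at h3
    field_simp at h3 ⊢
    linarith
  rw [Finset.sum_Icc_succ_top (by norm_num), Finset.sum_Icc_succ_top (by norm_num),
    Finset.Icc_self, Finset.sum_singleton, pow_one, uu_re, hre2, hre3]
  norm_num [Nat.choose]
  field_simp
  ring

noncomputable def calGIntegrandThreeZero (t : ℝ) : ℝ :=
  (9 * t ^ 3 - 19 * t ^ 2 + 8 * t - 1) / (2 * t ^ 3 * √(4 * t - 1))

noncomputable def calGPrimitiveThreeZero (t : ℝ) : ℝ :=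
  9 / 4 * √(4 * t - 1) + 5 / 2 * (√(4 * t - 1) / t) - √(4 * t - 1) / (4 * t ^ 2)
    - 9 * Real.arctan √(4 * t - 1)

-- At `t = 1/4` both sides vanish, because `1 / 0 = 0`.
lemma calG_three_zero_integrand_eq {t : ℝ} (ht : 1 / 4 ≤ t) :
    1 / √(4 * t - 1) *
      (t ^ 0 * ∑ j ∈ Finset.Icc 1 3, ((3 : ℕ).choose j : ℝ) * (1 - t) ^ (j - 1) * ((uu t) ^ j).re
        - ∑ l ∈ Finset.range 0, t ^ l)
      = calGIntegrandThreeZero t := by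
  rw [sum_choose_three_re_uu_pow ht, calGIntegrandThreeZero]
  simp only [pow_zero, one_mul, Finset.sum_range_zero, sub_zero]
  ring

lemma hasDerivAt_sqrt_four_mul_sub_one {t : ℝ} (ht : 1 / 4 < t) :
    HasDerivAt (fun t : ℝ ↦ √(4 * t - 1)) (2 / √(4 * t - 1)) t := by
  have h := (((hasDerivAt_id t).const_mul 4).sub_const 1).sqrt (ne_of_gt (by simp only [id]; linarith))
  simp only [id] at h
  convert h using 1
  ring

lemma hasDerivAt_calGPrimitiveThreeZero {t : ℝ} (ht : 1 / 4 < t) :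
    HasDerivAt calGPrimitiveThreeZero (calGIntegrandThreeZero t) t := by
  have ht0 : t ≠ 0 := by positivity
  have hs := hasDerivAt_sqrt_four_mul_sub_one ht
  refine (show HasDerivAt calGPrimitiveThreeZero _ t from
    (((hs.const_mul (9 / 4)).add ((hs.div (hasDerivAt_id t) ht0).const_mul (5 / 2))).sub
      (hs.div ((hasDerivAt_pow 2 t).const_mul 4) (by positivity))).sub
      (hs.arctan.const_mul 9)).congr_deriv ?_
  rw [calGIntegrandThreeZero]
  set s := √(4 * t - 1)
  have hs2 : s ^ 2 = 4 * t - 1 := Real.sq_sqrt (by linarith)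
  have hspos : 0 < s := Real.sqrt_pos.2 (by linarith)
  rw [show t = (s ^ 2 + 1) / 4 by rw [hs2]; ring]
  simp only [id]
  field_simp
  ring

lemma continuousOn_calGPrimitiveThreeZero :
    ContinuousOn calGPrimitiveThreeZero (Set.Icc (1 / 4) 1) := by
  have hne : ∀ t ∈ Set.Icc (1 / 4 : ℝ) 1, t ≠ 0 := fun t ht ↦ by linarith [ht.1]
  unfold calGPrimitiveThreeZero
  fun_prop (disch := first | exact hne | (intro t ht; have := hne t ht; positivity))

lemma calGIntegrandThreeZero_nonpos {t : ℝ} (ht : t ∈ Set.Icc (1 / 4 : ℝ) 1) :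
    calGIntegrandThreeZero t ≤ 0 := by
  obtain ⟨h1, h2⟩ := ht
  refine div_nonpos_of_nonpos_of_nonneg ?_ (by positivity)
  nlinarith [mul_nonneg (sub_nonneg.2 h1) (sub_nonneg.2 h2), sq_nonneg (t - 1 / 4)]

lemma intervalIntegrable_calGIntegrandThreeZero :
    IntervalIntegrable calGIntegrandThreeZero MeasureTheory.volume (1 / 4) 1 := by
  have h14 : (1 / 4 : ℝ) ≤ 1 := by norm_num
  have h : IntervalIntegrable (-calGIntegrandThreeZero) MeasureTheory.volume (1 / 4) 1 := by
    refine intervalIntegrable_deriv_of_nonneg (g := -calGPrimitiveThreeZero) ?_ ?_ ?_ <;>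
      simp only [Set.uIcc_of_le h14, min_eq_left h14, max_eq_right h14]
    · exact continuousOn_calGPrimitiveThreeZero.neg
    · exact fun t ht ↦ (hasDerivAt_calGPrimitiveThreeZero ht.1).neg
    · exact fun t ht ↦ neg_nonneg.2 (calGIntegrandThreeZero_nonpos (Set.Ioo_subset_Icc_self ht))
  simpa only [neg_neg] using h.neg

lemma calGPrimitiveThreeZero_one : calGPrimitiveThreeZero 1 = 9 / 2 * √3 - 3 * π := by
  rw [calGPrimitiveThreeZero, show (4 * 1 - 1 : ℝ) = 3 by norm_num, arctan_sqrt_three]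
  ring

lemma calGPrimitiveThreeZero_quarter : calGPrimitiveThreeZero (1 / 4) = 0 := by
  norm_num [calGPrimitiveThreeZero]

/-- `𝒢(3,0) = (27√3)/(2π) − 9`. -/
theorem calG_three_zero : calG 3 0 = 27 * Real.sqrt 3 / (2 * Real.pi) - 9 := by
  have hFTC := integral_eq_sub_of_hasDerivAt_of_le (by norm_num)
    continuousOn_calGPrimitiveThreeZero (fun t ht ↦ hasDerivAt_calGPrimitiveThreeZero ht.1)
    intervalIntegrable_calGIntegrandThreeZero
  rw [calG, integral_congr (g := calGIntegrandThreeZero) fun t ht ↦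
    calG_three_zero_integrand_eq (Set.uIcc_of_le (by norm_num : (1 / 4 : ℝ) ≤ 1) ▸ ht).1,
    hFTC, calGPrimitiveThreeZero_one, calGPrimitiveThreeZero_quarter]
  field_simp
  ring
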